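/- In the variety of 4-dimensional algebras, the algebra W01 with products e1e1=e2, e1e2=e4, e1e3=e4, e2e1=e4, e3e3=e4 degenerates to the algebra W02 with products e1e1=e2, e1e2=e4, e1e3=e4, e2e1=e4: the basis E1 = t e1, E2 = t² e2, E3 = t² e3, E4 = t³ e4 of W01 yields structure constants converging as t → 0 to those of W02. -/
import Mathlib


/-- The multiplication of the 4-dimensional complex algebra `W01`:
`e1e1 = e2`, `e1e2 = e4`, `e1e3 = e4`, `e2e1 = e4`, `e3e3 = e4`. -/
def w01mul (x y : Fin 4 → ℂ) : Fin 4 → ℂ :=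
  ![0, x 0 * y 0, 0, x 0 * y 1 + x 0 * y 2 + x 1 * y 0 + x 2 * y 2]

/-- The multiplication of the 4-dimensional complex algebra `W02`:
`e1e1 = e2`, `e1e2 = e4`, `e1e3 = e4`, `e2e1 = e4`. -/
def w02mul (x y : Fin 4 → ℂ) : Fin 4 → ℂ :=
  ![0, x 0 * y 0, 0, x 0 * y 1 + x 0 * y 2 + x 1 * y 0]

/-- The parametrized basis `E1 = t e1`, `E2 = t² e2`, `E3 = t² e3`, `E4 = t³ e4`. -/
def E17 (t : ℂ) : Fin 4 → (Fin 4 → ℂ) :=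
  ![![t, 0, 0, 0], ![0, t ^ 2, 0, 0], ![0, 0, t ^ 2, 0], ![0, 0, 0, t ^ 3]]

/-- Explicit structure constants. -/
def c17 (t : ℂ) (i j k : Fin 4) : ℂ :=
  if i = 0 ∧ j = 0 ∧ k = 1 then 1
  else if (i = 0 ∧ j = 1 ∧ k = 3) ∨ (i = 0 ∧ j = 2 ∧ k = 3) ∨ (i = 1 ∧ j = 0 ∧ k = 3) then 1
  else if i = 2 ∧ j = 2 ∧ k = 3 then t
  else 0

set_option maxHeartbeats 2000000 in
/-- `W01` degenerates to `W02`: in the parametrized basis `E17 t` the structure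
constants of `W01` converge, as `t → 0`, to those of `W02`. -/
theorem stmt_17 :
    ∃ c : ℂ → Fin 4 → Fin 4 → Fin 4 → ℂ,
      (∀ t : ℂ, t ≠ 0 → LinearIndependent ℂ (E17 t)) ∧
      (∀ t : ℂ, t ≠ 0 → ∀ i j : Fin 4,
        w01mul (E17 t i) (E17 t j) = ∑ k, c t i j k • E17 t k) ∧
      (∀ i j k : Fin 4,
        Filter.Tendsto (fun t => c t i j k) (nhdsWithin 0 {(0 : ℂ)}ᶜ)
          (nhds (w02mul (Pi.single i 1) (Pi.single j 1) k))) := by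
  refine ⟨c17, ?_, ?_, ?_⟩
  · intro t ht
    rw [Fintype.linearIndependent_iff]
    intro g hg i
    fin_cases i
    · have := congrFun hg 0
      simp [E17, Fin.sum_univ_four, Matrix.vecHead, Matrix.vecTail] at this
      simpa [ht] using this
    · have := congrFun hg 1
      simp [E17, Fin.sum_univ_four, Matrix.vecHead, Matrix.vecTail] at this
      simpa [ht, pow_eq_zero_iff] using this
    · have := congrFun hg 2
      simp [E17, Fin.sum_univ_four, Matrix.vecHead, Matrix.vecTail] at this
      simpa [ht, pow_eq_zero_iff] using this
    · have := congrFun hg 3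
      simp [E17, Fin.sum_univ_four, Matrix.vecHead, Matrix.vecTail] at this
      simpa [ht, pow_eq_zero_iff] using this
  · intro t ht i j
    funext k
    fin_cases i <;> fin_cases j <;> fin_cases k <;>
      simp [w01mul, E17, c17, Fin.sum_univ_four, Matrix.vecHead, Matrix.vecTail] <;> ring
  · intro i j k
    have hval : ∀ t : ℂ, c17 t i j k =
        w02mul (Pi.single i 1) (Pi.single j 1) k + (if i = 2 ∧ j = 2 ∧ k = 3 then t else 0) := by
      intro t
      fin_cases i <;> fin_cases j <;> fin_cases k <;>
        simp [w02mul, c17, Pi.single_apply]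
    simp only [hval]
    by_cases h : i = 2 ∧ j = 2 ∧ k = 3
    · obtain ⟨hi, hj, hk⟩ := h
      subst hi; subst hj; subst hk
      simp only [and_self, if_true]
      have : Filter.Tendsto (fun t : ℂ => w02mul (Pi.single 2 1) (Pi.single 2 1) 3 + t)
          (nhdsWithin 0 {(0 : ℂ)}ᶜ) (nhds (w02mul (Pi.single 2 1) (Pi.single 2 1) 3 + 0)) :=
        (tendsto_const_nhds.add Filter.tendsto_id).mono_left nhdsWithin_le_nhds
      simpa using this
    · simp only [h, if_false, add_zero]
      exact tendsto_const_nhds
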